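/- Let (U, I) be a standard implicational base with closure operator cl, c ∈ U, U_c = {x ∈ U : c ∉ cl({x})} assumed not cl-closed, and (U_c, I_c) the derived base as in the paper. Then the D-generators of c with respect to (U, I) are exactly the D-minimal keys of (U_c, I_c). -/

import Mathlib

/-- `F` is closed for the implicational base `I`. -/
def ImpClosed {U : Type*} (I : Set (Set U × U)) (F : Set U) : Prop :=
  ∀ p ∈ I, p.1 ⊆ F → p.2 ∈ F

/-- The closure operator induced by an implicational base `I`. -/
def clI {U : Type*} (I : Set (Set U × U)) (A : Set U) : Set U :=
  ⋂₀ {F | ImpClosed I F ∧ A ⊆ F}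

/-- `cl^b(A) = ⋃_{a ∈ A} cl({a})`. -/
def clb {U : Type*} (cl : Set U → Set U) (A : Set U) : Set U := ⋃ a ∈ A, cl {a}

/-- `A` is a minimal generator of `c`. -/
def MinGen {U : Type*} (cl : Set U → Set U) (c : U) (A : Set U) : Prop :=
  c ∉ A ∧ c ∈ cl A ∧ ∀ A' ⊂ A, c ∉ cl A'

/-- `A` is a `D`-generator of `c`. -/
def DGen {U : Type*} (cl : Set U → Set U) (c : U) (A : Set U) : Prop :=
  MinGen cl c A ∧ c ∉ clb cl A ∧
    ∀ A', MinGen cl c A' → A' ⊆ clb cl A → A' = A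

/-- `K` is a minimal key of the closure space with groundset `G` and closure
operator `cl'`. -/
def MinKey {U : Type*} (cl' : Set U → Set U) (G : Set U) (K : Set U) : Prop :=
  K ⊆ G ∧ cl' K = G ∧ ∀ K' ⊂ K, cl' K' ≠ G

/-- `K` is a `D`-minimal key. -/
def DMinKey {U : Type*} (cl' : Set U → Set U) (G : Set U) (K : Set U) : Prop :=
  MinKey cl' G K ∧
    ∀ K', MinKey cl' G K' → clb cl' K' ⊆ clb cl' K → K' = K

/-!
Write `U_c` for the elements whose closure avoids `c`. For `X ⊆ U_c` the derived closure is
`cl_c(X) = cl(X)` when `c ∉ cl(X)`, and `cl_c(X) = U_c` when `c ∈ cl(X)`: in the second case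
`cl_c(X)` is not `I`-closed (it misses `c`), and the only way out of it is through an implication
`A → d` with `d ∉ U_c`, whose derived implications `A → b` fill up the rest of `U_c`. As `U_c` is
not closed, the two cases are distinguished by `cl_c(X) = U_c`, so minimal generators of `c`
inside `U_c` are exactly the minimal keys of `(U_c, I_c)`. Moreover `cl_c = cl` on singletons of
`U_c`, so `cl^b` is unchanged, and the comparison `cl^b(A') ⊆ cl^b(A)` defining `D`-minimal keys
is equivalent to the condition `A' ⊆ cl^b(A)` defining `D`-generators.
-/

section ClosureOfBase

variable {U : Type*} {I : Set (Set U × U)} {A B X : Set U} {x : U}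

lemma subset_clI (I : Set (Set U × U)) (A : Set U) : A ⊆ clI I A :=
  fun _ hx _ hF => hF.2 hx

lemma impClosed_clI (I : Set (Set U × U)) (A : Set U) : ImpClosed I (clI I A) :=
  fun p hp hsub _ hF => hF.1 p hp fun _ hx => hsub hx _ hF

lemma clI_subset_of_impClosed (hF : ImpClosed I B) (hAB : A ⊆ B) : clI I A ⊆ B :=
  fun _ hx => hx B ⟨hF, hAB⟩

lemma clI_mono (h : A ⊆ B) : clI I A ⊆ clI I B :=
  clI_subset_of_impClosed (impClosed_clI I B) (h.trans (subset_clI I B))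

lemma clI_clI (I : Set (Set U × U)) (A : Set U) : clI I (clI I A) = clI I A :=
  (clI_subset_of_impClosed (impClosed_clI I A) le_rfl).antisymm (subset_clI I _)

lemma clI_singleton_subset (hx : x ∈ clI I X) : clI I {x} ⊆ clI I X :=
  clI_clI I X ▸ clI_mono (Set.singleton_subset_iff.2 hx)

lemma mem_clb {cl : Set U → Set U} : x ∈ clb cl A ↔ ∃ a ∈ A, x ∈ cl {a} := by
  simp [clb]

lemma subset_clb_clI (I : Set (Set U × U)) (A : Set U) : A ⊆ clb (clI I) A :=
  fun a ha => mem_clb.2 ⟨a, ha, subset_clI I {a} rfl⟩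

lemma clb_clI_subset_clb_clI_iff : clb (clI I) B ⊆ clb (clI I) A ↔ B ⊆ clb (clI I) A := by
  refine ⟨(subset_clb_clI I B).trans, fun h y hy => ?_⟩
  obtain ⟨b, hb, hyb⟩ := mem_clb.1 hy
  obtain ⟨a, ha, hba⟩ := mem_clb.1 (h hb)
  exact mem_clb.2 ⟨a, ha, clI_singleton_subset hba hyb⟩

end ClosureOfBase

section DerivedBase

variable {U : Type*} {I : Set (Set U × U)} {c : U} {A X : Set U}

/-- The groundset `U_c` of the derived base. -/
def avoiding (I : Set (Set U × U)) (c : U) : Set U := {x | c ∉ clI I {x}}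

/-- The derived base `I_c`. -/
def derivedBase (I : Set (Set U × U)) (c : U) : Set (Set U × U) :=
  {p | p ∈ I ∧ p.1 ∪ {p.2} ⊆ avoiding I c} ∪
    {p | ∃ d : U, (p.1, d) ∈ I ∧ p.1 ⊆ avoiding I c ∧ d ∉ avoiding I c ∧
      p.2 ∈ avoiding I c \ clb (clI I) p.1}

lemma notMem_avoiding : c ∉ avoiding I c :=
  fun h => h (subset_clI I {c} rfl)

lemma clI_subset_avoiding (hc : c ∉ clI I X) : clI I X ⊆ avoiding I c :=
  fun _ hy hcy => hc (clI_singleton_subset hy hcy)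

lemma subset_avoiding_iff : A ⊆ avoiding I c ↔ c ∉ clb (clI I) A := by
  simp only [mem_clb, not_exists, not_and]
  rfl

lemma clb_clI_subset_avoiding (hA : A ⊆ avoiding I c) : clb (clI I) A ⊆ avoiding I c := by
  intro y hy
  obtain ⟨a, ha, hya⟩ := mem_clb.1 hy
  exact clI_subset_avoiding (hA ha) hya

lemma impClosed_derivedBase_avoiding : ImpClosed (derivedBase I c) (avoiding I c) := by
  rintro p (⟨-, hsub⟩ | ⟨-, -, -, -, hb, -⟩) -
  · exact hsub (Or.inr rfl)
  · exact hb

lemma clI_derivedBase_subset_avoiding (hX : X ⊆ avoiding I c) :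
    clI (derivedBase I c) X ⊆ avoiding I c :=
  clI_subset_of_impClosed impClosed_derivedBase_avoiding hX

lemma clI_derivedBase_of_notMem (hc : c ∉ clI I X) : clI (derivedBase I c) X = clI I X := by
  have hav := clI_subset_avoiding hc
  have hle : clI (derivedBase I c) X ⊆ clI I X := by
    refine clI_subset_of_impClosed ?_ (subset_clI I X)
    rintro p (⟨hp, -⟩ | ⟨d, hd, -, hdU, -⟩) hsub
    · exact impClosed_clI I X p hp hsub
    · exact absurd (hav (impClosed_clI I X _ hd hsub)) hdU
  refine hle.antisymm (clI_subset_of_impClosed (fun p hp hsub => ?_) (subset_clI _ X))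
  have hp2 : p.2 ∈ avoiding I c := hav (impClosed_clI I X p hp (hsub.trans hle))
  exact impClosed_clI _ X p
    (Or.inl ⟨hp, Set.union_subset ((hsub.trans hle).trans hav) (Set.singleton_subset_iff.2 hp2)⟩)
    hsub

lemma clb_clI_derivedBase (hA : A ⊆ avoiding I c) :
    clb (clI (derivedBase I c)) A = clb (clI I) A := by
  ext y
  simp only [mem_clb]
  refine exists_congr fun a => and_congr_right fun ha => ?_
  rw [clI_derivedBase_of_notMem (hA ha)]

lemma clI_derivedBase_of_mem (hX : X ⊆ avoiding I c) (hc : c ∈ clI I X) :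
    clI (derivedBase I c) X = avoiding I c := by
  set C := clI (derivedBase I c) X
  have hsub : C ⊆ avoiding I c := clI_derivedBase_subset_avoiding hX
  have hnot : ¬ ImpClosed I C := fun h =>
    notMem_avoiding (hsub (clI_subset_of_impClosed h (subset_clI _ X) hc))
  simp only [ImpClosed, not_forall] at hnot
  obtain ⟨⟨B, d⟩, hBd, hBC, hdC⟩ := hnot
  have hdU : d ∉ avoiding I c := fun hd => hdC <| impClosed_clI _ X _
    (Or.inl ⟨hBd, Set.union_subset (hBC.trans hsub) (Set.singleton_subset_iff.2 hd)⟩) hBC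
  have hclb : clb (clI I) B ⊆ C := by
    intro y hy
    obtain ⟨a, ha, hya⟩ := mem_clb.1 hy
    rw [← clI_derivedBase_of_notMem (hsub (hBC ha))] at hya
    exact clI_singleton_subset (hBC ha) hya
  refine hsub.antisymm fun b hb => ?_
  by_cases hbB : b ∈ clb (clI I) B
  · exact hclb hbB
  · exact impClosed_clI _ X (B, b) (Or.inr ⟨d, hBd, hBC.trans hsub, hdU, hb, hbB⟩) hBC

lemma mem_clI_iff_clI_derivedBase_eq (hnotclosed : clI I (avoiding I c) ≠ avoiding I c)
    (hX : X ⊆ avoiding I c) :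
    c ∈ clI I X ↔ clI (derivedBase I c) X = avoiding I c := by
  refine ⟨clI_derivedBase_of_mem hX, fun h => by_contra fun hc => hnotclosed ?_⟩
  rw [clI_derivedBase_of_notMem hc] at h
  rw [← h, clI_clI]

lemma minGen_iff_minKey (hnotclosed : clI I (avoiding I c) ≠ avoiding I c)
    (hA : A ⊆ avoiding I c) :
    MinGen (clI I) c A ↔ MinKey (clI (derivedBase I c)) (avoiding I c) A := by
  have key : ∀ {X}, X ⊆ A → (c ∈ clI I X ↔ clI (derivedBase I c) X = avoiding I c) :=
    fun hXA => mem_clI_iff_clI_derivedBase_eq hnotclosed (hXA.trans hA)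
  constructor
  · rintro ⟨-, hcA, hmin⟩
    exact ⟨hA, (key le_rfl).1 hcA, fun K hK heq => hmin K hK ((key hK.subset).2 heq)⟩
  · rintro ⟨-, hcl, hmin⟩
    exact ⟨fun hcA => notMem_avoiding (hA hcA), (key le_rfl).2 hcl,
      fun K hK hc => hmin K hK ((key hK.subset).1 hc)⟩

lemma minGen_and_subset_clb_iff (hnotclosed : clI I (avoiding I c) ≠ avoiding I c)
    (hA : A ⊆ avoiding I c) {A' : Set U} (hA' : A' ⊆ avoiding I c) :
    MinGen (clI I) c A' ∧ A' ⊆ clb (clI I) A ↔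
      MinKey (clI (derivedBase I c)) (avoiding I c) A' ∧
        clb (clI (derivedBase I c)) A' ⊆ clb (clI (derivedBase I c)) A := by
  rw [minGen_iff_minKey hnotclosed hA', clb_clI_derivedBase hA', clb_clI_derivedBase hA,
    clb_clI_subset_clb_clI_iff]

lemma dGen_iff_dMinKey (hnotclosed : clI I (avoiding I c) ≠ avoiding I c)
    (hA : A ⊆ avoiding I c) :
    DGen (clI I) c A ↔ DMinKey (clI (derivedBase I c)) (avoiding I c) A := by
  simp only [DGen, DMinKey, minGen_iff_minKey hnotclosed hA, subset_avoiding_iff.1 hA,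
    not_false_eq_true, true_and, ← and_imp]
  refine and_congr_right fun _ => forall_congr' fun A' => imp_congr_left ⟨fun h => ?_, fun h => ?_⟩
  · exact (minGen_and_subset_clb_iff hnotclosed hA (h.2.trans (clb_clI_subset_avoiding hA))).1 h
  · exact (minGen_and_subset_clb_iff hnotclosed hA h.1.1).2 h

end DerivedBase

theorem stmt17_general {U : Type*} (I : Set (Set U × U))
    (c : U)
    (Uc : Set U) (hUc : Uc = {x : U | c ∉ clI I {x}})
    (hnotclosed : clI I Uc ≠ Uc)
    (Ic : Set (Set U × U))
    (hIc : Ic =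
      {p | p ∈ I ∧ p.1 ∪ {p.2} ⊆ Uc} ∪
      {p | ∃ d : U, (p.1, d) ∈ I ∧ p.1 ⊆ Uc ∧ d ∉ Uc ∧
        p.2 ∈ Uc \ clb (clI I) p.1}) :
    ∀ A : Set U, DGen (clI I) c A ↔ DMinKey (clI Ic) Uc A := by
  subst hUc hIc
  intro A
  by_cases hA : A ⊆ avoiding I c
  · exact dGen_iff_dMinKey hnotclosed hA
  · exact iff_of_false (fun h => hA (subset_avoiding_iff.2 h.2.1)) (fun h => hA h.1.1)

/-- the `D`-generators of `c` w.r.t. `(U, I)` are exactly the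
`D`-minimal keys of the derived base `(U_c, I_c)`. -/
theorem stmt17 {U : Type*} [Fintype U] (I : Set (Set U × U))
    (hstd : ∀ x : U, ImpClosed I (clI I {x} \ {x}))
    (c : U)
    (Uc : Set U) (hUc : Uc = {x : U | c ∉ clI I {x}})
    (hnotclosed : clI I Uc ≠ Uc)
    (Ic : Set (Set U × U))
    (hIc : Ic =
      {p | p ∈ I ∧ p.1 ∪ {p.2} ⊆ Uc} ∪
      {p | ∃ d : U, (p.1, d) ∈ I ∧ p.1 ⊆ Uc ∧ d ∉ Uc ∧
        p.2 ∈ Uc \ clb (clI I) p.1}) :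
    ∀ A : Set U, DGen (clI I) c A ↔ DMinKey (clI Ic) Uc A :=
  stmt17_general I c Uc hUc hnotclosed Ic hIc
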